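/- Let n ≥ 4 and let u₁, u₂, b₁, b₂ ∈ ℝⁿ be unit vectors. Then there exists (ζ,s) ∈ ℝⁿ × ℝ with (ζ,s) ≠ 0 such that: (u₁ ⊗ u₁ − b₁ ⊗ b₁ − u₂ ⊗ u₂ + b₂ ⊗ b₂)ζ + s(u₁ − u₂) = 0, (b₁ ⊗ u₁ − u₁ ⊗ b₁ − b₂ ⊗ u₂ + u₂ ⊗ b₂)ζ + s(b₁ − b₂) = 0, (u₁ − u₂) · ζ = 0, and (b₁ − b₂) · ζ = 0. Consequently, the difference of any two elements of the constitutive set K lies in the wave cone Λ. -/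

import Mathlib

open scoped RealInnerProductSpace

open Module in
theorem exists_ne_zero_forall_inner_eq_zero {𝕜 E ι : Type*} [RCLike 𝕜]
    [NormedAddCommGroup E] [InnerProductSpace 𝕜 E] [FiniteDimensional 𝕜 E] [Fintype ι]
    (v : ι → E) (h : Fintype.card ι < finrank 𝕜 E) :
    ∃ ζ : E, ζ ≠ 0 ∧ ∀ i, inner 𝕜 (v i) ζ = 0 := by
  let f : E →ₗ[𝕜] ι → 𝕜 := LinearMap.pi fun i => innerₛₗ 𝕜 (v i)
  have hker : LinearMap.ker f ≠ ⊥ := LinearMap.ker_ne_bot_of_finrank_lt (by simpa using h)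
  obtain ⟨ζ, hζf, hζ⟩ := Submodule.exists_mem_ne_zero_of_ne_bot hker
  exact ⟨ζ, hζ, fun i => congr_fun hζf i⟩

theorem difference_in_wave_cone_general (n : ℕ) (hn : 4 ≤ n)
    (u₁ u₂ b₁ b₂ : EuclideanSpace ℝ (Fin n)) :
    ∃ (ζ : EuclideanSpace ℝ (Fin n)) (s : ℝ), ¬ (ζ = 0 ∧ s = 0) ∧
      ⟪u₁, ζ⟫ • u₁ - ⟪b₁, ζ⟫ • b₁ - ⟪u₂, ζ⟫ • u₂ + ⟪b₂, ζ⟫ • b₂ + s • (u₁ - u₂) = 0 ∧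
      ⟪u₁, ζ⟫ • b₁ - ⟪b₁, ζ⟫ • u₁ - ⟪u₂, ζ⟫ • b₂ + ⟪b₂, ζ⟫ • u₂ + s • (b₁ - b₂) = 0 ∧
      ⟪u₁ - u₂, ζ⟫ = 0 ∧ ⟪b₁ - b₂, ζ⟫ = 0 := by
  obtain ⟨ζ, hζ, horth⟩ := exists_ne_zero_forall_inner_eq_zero (𝕜 := ℝ) ![u₁ - u₂, b₁, b₂]
    (by rw [Fintype.card_fin, finrank_euclideanSpace_fin]; omega)
  have hu : ⟪u₁ - u₂, ζ⟫ = 0 := horth 0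
  have hb₁ : ⟪b₁, ζ⟫ = 0 := horth 1
  have hb₂ : ⟪b₂, ζ⟫ = 0 := horth 2
  have hu₂ : ⟪u₂, ζ⟫ = ⟪u₁, ζ⟫ := by rw [inner_sub_left, sub_eq_zero] at hu; exact hu.symm
  -- with `ζ ⟂ b₁, b₂` and `⟪u₁, ζ⟫ = ⟪u₂, ζ⟫`, the choice `s = -⟪u₁, ζ⟫` cancels both vector equations
  refine ⟨ζ, -⟪u₁, ζ⟫, fun h => hζ h.1, ?_, ?_, hu, ?_⟩
  · rw [hb₁, hb₂, hu₂]; module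
  · rw [hb₁, hb₂, hu₂]; module
  · rw [inner_sub_left, hb₁, hb₂, sub_zero]

/-- **Wave-cone condition (equations (4.4)–(4.6) in the proof of Lemma 3.5).** For `n ≥ 4`
and unit vectors `u₁, u₂, b₁, b₂ ∈ ℝⁿ` there exists a nonzero `(ζ, s) ∈ ℝⁿ × ℝ` with
`(u₁⊗u₁ − b₁⊗b₁ − u₂⊗u₂ + b₂⊗b₂)ζ + s(u₁ − u₂) = 0`,
`(b₁⊗u₁ − u₁⊗b₁ − b₂⊗u₂ + u₂⊗b₂)ζ + s(b₁ − b₂) = 0`,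
`(u₁ − u₂)·ζ = 0` and `(b₁ − b₂)·ζ = 0`; consequently differences of elements of the
constitutive set `K` lie in the wave cone `Λ`. -/
theorem difference_in_wave_cone (n : ℕ) (hn : 4 ≤ n)
    (u₁ u₂ b₁ b₂ : EuclideanSpace ℝ (Fin n))
    (hu₁ : ‖u₁‖ = 1) (hu₂ : ‖u₂‖ = 1) (hb₁ : ‖b₁‖ = 1) (hb₂ : ‖b₂‖ = 1) :
    ∃ (ζ : EuclideanSpace ℝ (Fin n)) (s : ℝ), ¬ (ζ = 0 ∧ s = 0) ∧
      ⟪u₁, ζ⟫ • u₁ - ⟪b₁, ζ⟫ • b₁ - ⟪u₂, ζ⟫ • u₂ + ⟪b₂, ζ⟫ • b₂ + s • (u₁ - u₂) = 0 ∧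
      ⟪u₁, ζ⟫ • b₁ - ⟪b₁, ζ⟫ • u₁ - ⟪u₂, ζ⟫ • b₂ + ⟪b₂, ζ⟫ • u₂ + s • (b₁ - b₂) = 0 ∧
      ⟪u₁ - u₂, ζ⟫ = 0 ∧ ⟪b₁ - b₂, ζ⟫ = 0 :=
  difference_in_wave_cone_general n hn u₁ u₂ b₁ b₂
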